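/- Under the su(N) generator hypotheses, the Dirac matrices in the Dirac representation, and the Grassmann setup, the axial-vector Fierz identity for U(N) fermions holds: Σ_{a : Fin (N^2−1)} Σ_{μ} ε μ • ⟪γ5 * γ μ, T a⟫ * ⟪γ5 * γ μ, T a⟫ = (1/2) • ⟪1⟫ * ⟪1⟫ + (1/4) • Σ_{μ} ε μ • ⟪γ μ⟫ * ⟪γ μ⟫ + ((N−2)/(4·N)) • Σ_{μ} ε μ • ⟪γ5 * γ μ⟫ * ⟪γ5 * γ μ⟫ − (1/2) • ⟪γ5⟫ * ⟪γ5⟫, where μ ranges over Fin 4. -/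

import Mathlib

noncomputable section

open Complex Matrix

/-- The Dirac γ-matrices in the Dirac representation. -/
def γm : Fin 4 → Matrix (Fin 4) (Fin 4) ℂ :=
  ![!![1,0,0,0; 0,1,0,0; 0,0,-1,0; 0,0,0,-1],
    !![0,0,0,1; 0,0,1,0; 0,-1,0,0; -1,0,0,0],
    !![0,0,0,-I; 0,0,I,0; 0,I,0,0; -I,0,0,0],
    !![0,0,1,0; 0,0,0,-1; -1,0,0,0; 0,1,0,0]]

/-- γ⁵ = i·γ⁰γ¹γ²γ³. -/
def γ5 : Matrix (Fin 4) (Fin 4) ℂ := I • (γm 0 * γm 1 * γm 2 * γm 3)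

/-- σ^{μν} = (i/2)[γ^μ, γ^ν]. -/
def σm (μ ν : Fin 4) : Matrix (Fin 4) (Fin 4) ℂ := (I / 2) • (γm μ * γm ν - γm ν * γm μ)

/-- The metric signs ε 0 = 1, ε 1 = ε 2 = ε 3 = −1 used to raise/lower indices. -/
def εs : Fin 4 → ℤ := ![1, -1, -1, -1]

/-- The totally antisymmetric Levi-Civita symbol on four indices,
normalized by ε₄ 0 1 2 3 = 1. -/
def ε4 (κ l μ ν : Fin 4) : ℤ :=
  Matrix.det (Matrix.of fun p q : Fin 4 => if ![κ, l, μ, ν] p = q then (1 : ℤ) else 0)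

/-- The Grassmann algebra generated by the 8N fermion components:
the exterior algebra of the direct sum of two copies of (Fin 4 × Fin N) → ℂ. -/
abbrev GrassAlg (N : ℕ) :=
  ExteriorAlgebra ℂ (((Fin 4 × Fin N) → ℂ) × ((Fin 4 × Fin N) → ℂ))

/-- ψ (A, i): the image in the Grassmann algebra of the standard basis vector
of the first summand indexed by (A, i). -/
def ψv (N : ℕ) (A : Fin 4) (i : Fin N) : GrassAlg N :=
  ExteriorAlgebra.ι ℂ (Pi.single (A, i) 1, 0)

/-- ψ̄ (A, i): the image in the Grassmann algebra of the standard basis vector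
of the second summand indexed by (A, i). -/
def ψbar (N : ℕ) (A : Fin 4) (i : Fin N) : GrassAlg N :=
  ExteriorAlgebra.ι ℂ (0, Pi.single (A, i) 1)

/-- The fermion bilinear B Γ i j = ∑_{A,B} Γ A B · ψ̄ (A,i) ψ (B,j). -/
def Bgr (N : ℕ) (Γ : Matrix (Fin 4) (Fin 4) ℂ) (i j : Fin N) : GrassAlg N :=
  ∑ A : Fin 4, ∑ B : Fin 4, Γ A B • (ψbar N A i * ψv N B j)

/-- ⟪Γ, X⟫ = ∑_{i,j} X i j · B Γ i j, the bilinear with Dirac structure Γ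
and color structure X. -/
def pairing (N : ℕ) (Γ : Matrix (Fin 4) (Fin 4) ℂ)
    (X : Matrix (Fin N) (Fin N) ℂ) : GrassAlg N :=
  ∑ i : Fin N, ∑ j : Fin N, X i j • Bgr N Γ i j

/-- ⟪Γ⟫ = ⟪Γ, 1⟫, the color-singlet bilinear. -/
def sing (N : ℕ) (Γ : Matrix (Fin 4) (Fin 4) ℂ) : GrassAlg N := pairing N Γ 1


/-! Completeness of `{1, Tᵃ}` in `M_N(ℂ)` gives
`∑ₐ Tᵃᵢⱼ Tᵃₖₗ = ½ δᵢₗ δⱼₖ - (1/2N) δᵢⱼ δₖₗ`, which splits the adjoint-colour product into a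
colour-crossed term and a colour-singlet term. Anticommuting the Grassmann generators turns the
crossed term into a colour-singlet four-fermion operator with Fierz-exchanged Dirac indices, and
the Fierz identity for `γ⁵γ^μ ⊗ γ⁵γ_μ` re-expands it in singlet bilinears. The two contributions
to the axial channel combine as `¼ - 1/(2N) = (N-2)/(4N)`. -/

open Finset

namespace ExteriorAlgebra

variable {R M : Type*} [CommRing R] [AddCommGroup M] [Module R M]

theorem ι_mul_ι_swap (x y : M) : ι R x * ι R y = -(ι R y * ι R x) :=
  eq_neg_of_add_eq_zero_left (ι_add_mul_swap x y)

theorem ι_mul_ι_mul_ι_mul_ι_swap (x y z w : M) :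
    ι R x * ι R y * (ι R z * ι R w) = -(ι R x * ι R w * (ι R z * ι R y)) := by
  simp only [mul_assoc]
  rw [ι_mul_ι_swap z w, mul_neg, ← mul_assoc (ι R y), ι_mul_ι_swap y w, neg_mul, neg_neg,
    mul_assoc, ι_mul_ι_swap y z, mul_neg, mul_neg]

end ExteriorAlgebra

theorem sum_sum_sum_rev {ι κ τ β : Type*} [Fintype ι] [Fintype κ] [Fintype τ] [AddCommMonoid β]
    (f : ι → κ → τ → β) : ∑ x, ∑ y, ∑ z, f x y z = ∑ z, ∑ y, ∑ x, f x y z := by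
  rw [sum_comm]
  simp_rw [sum_comm (γ := ι)]
  exact sum_comm

section Color

variable {N : ℕ} {T : Fin (N ^ 2 - 1) → Matrix (Fin N) (Fin N) ℂ}

theorem linearIndependent_one_generators (hN : N ≠ 0) (htr : ∀ a, (T a).trace = 0)
    (horth : ∀ a b, (T a * T b).trace = if a = b then (1 / 2 : ℂ) else 0) :
    LinearIndependent ℂ fun o : Option (Fin (N ^ 2 - 1)) => o.elim 1 T := by
  let B : LinearMap.BilinForm ℂ (Matrix (Fin N) (Fin N) ℂ) :=
    (LinearMap.mul ℂ _).compr₂ (traceLinearMap _ ℂ ℂ)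
  refine LinearMap.BilinForm.linearIndependent_of_iIsOrtho (B := B) ?_ ?_
  · rintro (_ | a) (_ | b) hab <;> simp_all [B, Function.onFun]
  · rintro (_ | a) <;> simp [B, horth, hN]

theorem eq_trace_smul_one_add_sum_trace_mul_smul (hN : N ≠ 0) (htr : ∀ a, (T a).trace = 0)
    (horth : ∀ a b, (T a * T b).trace = if a = b then (1 / 2 : ℂ) else 0)
    (X : Matrix (Fin N) (Fin N) ℂ) :
    X = (X.trace / N) • 1 + ∑ a, (2 * (X * T a).trace) • T a := by
  have hcard : Fintype.card (Option (Fin (N ^ 2 - 1))) =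
      Module.finrank ℂ (Matrix (Fin N) (Fin N) ℂ) := by
    have : 1 ≤ N ^ 2 := Nat.one_le_pow _ _ (Nat.pos_of_ne_zero hN)
    simp [Module.finrank_matrix, ← sq]
    omega
  let b := basisOfLinearIndependentOfCardEqFinrank
    (linearIndependent_one_generators hN htr horth) hcard
  set c := b.repr X
  have hX : X = c none • 1 + ∑ a, c (some a) • T a := by
    conv_lhs => rw [← b.sum_repr X]
    simp [Fintype.sum_option, b, c]
  have htrX : X.trace = c none * N := by
    rw [hX]
    simp [htr]
  have htrXT : ∀ a, (X * T a).trace = c (some a) / 2 := by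
    intro a
    rw [hX]
    simp [add_mul, sum_mul, horth, htr, div_eq_mul_inv]
  rw [htrX]
  simp_rw [htrXT]
  field_simp
  exact hX

theorem sum_generator_apply_mul_apply (hN : N ≠ 0) (htr : ∀ a, (T a).trace = 0)
    (horth : ∀ a b, (T a * T b).trace = if a = b then (1 / 2 : ℂ) else 0) (i j k l : Fin N) :
    ∑ a, T a i j * T a k l =
      1 / 2 * ((1 : Matrix (Fin N) (Fin N) ℂ) i l * (1 : Matrix (Fin N) (Fin N) ℂ) j k)
        - 1 / (2 * N) *
          ((1 : Matrix (Fin N) (Fin N) ℂ) i j * (1 : Matrix (Fin N) (Fin N) ℂ) k l) := by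
  have h := congrFun (congrFun
    (eq_trace_smul_one_add_sum_trace_mul_smul hN htr horth (single l k 1)) i) j
  have htrE : (single l k (1 : ℂ)).trace = (1 : Matrix (Fin N) (Fin N) ℂ) k l := by
    simpa using trace_single_mul l k (1 : ℂ) (1 : Matrix (Fin N) (Fin N) ℂ)
  have hsum : ∑ a, 2 * T a k l * T a i j = 2 * ∑ a, T a i j * T a k l := by
    rw [mul_sum]
    exact sum_congr rfl fun a _ => by ring
  simp only [trace_single_mul, htrE, smul_eq_mul, one_mul, Matrix.add_apply, Matrix.smul_apply,
    Matrix.sum_apply, single_apply, hsum] at h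
  simp only [one_apply] at h ⊢
  rw [ite_and] at h
  split_ifs at h ⊢ <;> subst_vars <;> first | linear_combination -h / 2 | contradiction

end Color

section Dirac

def diracTensor (Γ Γ' : Matrix (Fin 4) (Fin 4) ℂ) : Fin 4 → Fin 4 → Fin 4 → Fin 4 → ℂ :=
  fun A B C D => Γ A B * Γ' C D

def fierzTensor (Γ Γ' : Matrix (Fin 4) (Fin 4) ℂ) : Fin 4 → Fin 4 → Fin 4 → Fin 4 → ℂ :=
  fun A B C D => Γ A D * Γ' C B

theorem γ5_eq : γ5 = !![0,0,1,0; 0,0,0,1; 1,0,0,0; 0,1,0,0] := by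
  ext A B
  fin_cases A <;> fin_cases B <;> simp [γ5, γm]

theorem γ5_mul_γm_eq (μ : Fin 4) : γ5 * γm μ =
    ![!![0,0,-1,0; 0,0,0,-1; 1,0,0,0; 0,1,0,0],
      !![0,-1,0,0; -1,0,0,0; 0,0,0,1; 0,0,1,0],
      !![0,I,0,0; -I,0,0,0; 0,0,0,-I; 0,0,I,0],
      !![-1,0,0,0; 0,1,0,0; 0,0,1,0; 0,0,0,-1]] μ := by
  ext A B
  fin_cases μ <;> fin_cases A <;> fin_cases B <;>
    simp [γ5_eq, γm, mul_apply, Fin.sum_univ_four]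

set_option maxHeartbeats 1000000 in
theorem sum_εs_smul_fierzTensor_γ5_mul_γm :
    ∑ μ, (εs μ : ℂ) • fierzTensor (γ5 * γm μ) (γ5 * γm μ) =
      -diracTensor 1 1 - (1 / 2 : ℂ) • ∑ μ, (εs μ : ℂ) • diracTensor (γm μ) (γm μ)
        - (1 / 2 : ℂ) • ∑ μ, (εs μ : ℂ) • diracTensor (γ5 * γm μ) (γ5 * γm μ)
        + diracTensor γ5 γ5 := by
  funext A B C D
  simp only [γ5_mul_γm_eq, fierzTensor, diracTensor, Finset.sum_apply, Pi.add_apply,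
    Pi.sub_apply, Pi.neg_apply, Pi.smul_apply, smul_eq_mul, Fin.sum_univ_four]
  rw [γ5_eq]
  fin_cases A <;> fin_cases B <;> fin_cases C <;> fin_cases D <;>
    simp [γm, εs, one_apply] <;> ring_nf

end Dirac

section Grassmann

variable (N : ℕ)

def ψbarψ (A B : Fin 4) : GrassAlg N := ∑ i, ψbar N A i * ψv N B i

def fourFermion : (Fin 4 → Fin 4 → Fin 4 → Fin 4 → ℂ) →ₗ[ℂ] GrassAlg N where
  toFun K := ∑ A, ∑ B, ∑ C, ∑ D, K A B C D • (ψbarψ N A B * ψbarψ N C D)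
  map_add' K L := by simp only [Pi.add_apply, add_smul, sum_add_distrib]
  map_smul' c K := by
    simp only [Pi.smul_apply, smul_eq_mul, mul_smul, smul_sum, RingHom.id_apply]

theorem fourFermion_apply (K : Fin 4 → Fin 4 → Fin 4 → Fin 4 → ℂ) :
    fourFermion N K = ∑ A, ∑ B, ∑ C, ∑ D, K A B C D • (ψbarψ N A B * ψbarψ N C D) :=
  rfl

theorem sing_eq_sum_smul_ψbarψ (Γ : Matrix (Fin 4) (Fin 4) ℂ) :
    sing N Γ = ∑ A, ∑ B, Γ A B • ψbarψ N A B := by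
  simp only [sing, pairing, one_apply, ite_smul, one_smul, zero_smul, sum_ite_eq, mem_univ,
    if_true]
  simp only [Bgr, ψbarψ, smul_sum]
  simp_rw [sum_comm (γ := Fin N) (α := Fin 4)]

theorem sing_mul_sing (Γ Γ' : Matrix (Fin 4) (Fin 4) ℂ) :
    sing N Γ * sing N Γ' = fourFermion N (diracTensor Γ Γ') := by
  simp only [sing_eq_sum_smul_ψbarψ, sum_mul]
  simp only [mul_sum, smul_mul_smul_comm, fourFermion_apply, diracTensor]

theorem sum_Bgr_mul_Bgr_swap (Γ Γ' : Matrix (Fin 4) (Fin 4) ℂ) :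
    ∑ i, ∑ k, Bgr N Γ i k * Bgr N Γ' k i = -fourFermion N (fierzTensor Γ Γ') := by
  calc ∑ i, ∑ k, Bgr N Γ i k * Bgr N Γ' k i
      = -∑ A, ∑ B, ∑ C, ∑ D, (Γ A B * Γ' C D) • (ψbarψ N A D * ψbarψ N C B) := by
        simp only [Bgr, ψbarψ, sum_mul]
        simp only [mul_sum, smul_mul_smul_comm, smul_sum, ← sum_neg_distrib]
        simp_rw [sum_comm (γ := Fin N) (α := Fin 4)]
        congr! 6 with A _ B _ C _ D _ i _ k _
        rw [← smul_neg]
        exact congrArg _ (ExteriorAlgebra.ι_mul_ι_mul_ι_mul_ι_swap _ _ _ _)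
    _ = -fourFermion N (fierzTensor Γ Γ') := by
        rw [fourFermion_apply]
        exact congrArg _ (sum_congr rfl fun A _ => sum_sum_sum_rev _)

theorem pairing_mul_pairing (Γ Γ' : Matrix (Fin 4) (Fin 4) ℂ)
    (X Y : Matrix (Fin N) (Fin N) ℂ) :
    pairing N Γ X * pairing N Γ' Y =
      ∑ i, ∑ j, ∑ k, ∑ l, (X i j * Y k l) • (Bgr N Γ i j * Bgr N Γ' k l) := by
  simp only [pairing, sum_mul]
  simp only [mul_sum, smul_mul_smul_comm]

theorem sum_pairing_mul_pairing {T : Fin (N ^ 2 - 1) → Matrix (Fin N) (Fin N) ℂ} (hN : N ≠ 0)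
    (htr : ∀ a, (T a).trace = 0)
    (horth : ∀ a b, (T a * T b).trace = if a = b then (1 / 2 : ℂ) else 0)
    (Γ Γ' : Matrix (Fin 4) (Fin 4) ℂ) :
    ∑ a, pairing N Γ (T a) * pairing N Γ' (T a) =
      (1 / 2 : ℂ) • ∑ i, ∑ k, Bgr N Γ i k * Bgr N Γ' k i
        - (1 / (2 * N) : ℂ) • (sing N Γ * sing N Γ') := by
  simp_rw [sing, pairing_mul_pairing, sum_comm (γ := Fin (N ^ 2 - 1)) (α := Fin N), ← sum_smul,
    sum_generator_apply_mul_apply hN htr horth, sub_smul, sum_sub_distrib, mul_smul,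
    ← smul_sum]
  congr 2
  simp only [one_apply, ite_smul, one_smul, zero_smul, sum_ite_eq, mem_univ, if_true]

end Grassmann

theorem fierz_axial_general (N : ℕ) (hN : 2 ≤ N)
    (T : Fin (N ^ 2 - 1) → Matrix (Fin N) (Fin N) ℂ)
    (htr : ∀ a, (T a).trace = 0)
    (horth : ∀ a b, (T a * T b).trace = if a = b then (1 / 2 : ℂ) else 0) :
    ∑ a, ∑ μ, (εs μ : ℂ) •
        (pairing N (γ5 * γm μ) (T a) * pairing N (γ5 * γm μ) (T a)) =
      (1 / 2 : ℂ) • (sing N 1 * sing N 1)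
        + (1 / 4 : ℂ) • ∑ μ, (εs μ : ℂ) • (sing N (γm μ) * sing N (γm μ))
        + (((N : ℂ) - 2) / (4 * (N : ℂ))) • ∑ μ, (εs μ : ℂ) •
            (sing N (γ5 * γm μ) * sing N (γ5 * γm μ))
        - (1 / 2 : ℂ) • (sing N γ5 * sing N γ5) := by
  have hN0 : N ≠ 0 := by omega
  have hcoef : ((N : ℂ) - 2) / (4 * N) = 1 / 2 * (1 / 2) - 1 / (2 * N) := by
    field_simp
    ring
  calc _ = ∑ μ, (εs μ : ℂ) • ∑ a, pairing N (γ5 * γm μ) (T a) * pairing N (γ5 * γm μ) (T a) := by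
        rw [sum_comm]
        simp_rw [smul_sum]
    _ = -(1 / 2 : ℂ) • fourFermion N (∑ μ, (εs μ : ℂ) • fierzTensor (γ5 * γm μ) (γ5 * γm μ))
          - (1 / (2 * N) : ℂ) • ∑ μ, (εs μ : ℂ) • (sing N (γ5 * γm μ) * sing N (γ5 * γm μ)) := by
        simp_rw [sum_pairing_mul_pairing N hN0 htr horth, sum_Bgr_mul_Bgr_swap]
        simp only [map_sum, map_smul, smul_sum, ← sum_sub_distrib]
        refine sum_congr rfl fun μ _ => ?_
        module
    _ = _ := by
        rw [sum_εs_smul_fierzTensor_γ5_mul_γm]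
        simp only [map_add, map_sub, map_neg, map_smul, map_sum, ← sing_mul_sing, hcoef]
        module

/-- **Axial-vector Fierz identity for U(N) fermions.** -/
theorem fierz_axial (N : ℕ) (hN : 2 ≤ N)
    (T : Fin (N ^ 2 - 1) → Matrix (Fin N) (Fin N) ℂ)
    (htr : ∀ a, (T a).trace = 0)
    (hherm : ∀ a, (T a)ᴴ = T a)
    (horth : ∀ a b, (T a * T b).trace = if a = b then (1 / 2 : ℂ) else 0) :
    ∑ a, ∑ μ, (εs μ : ℂ) •
        (pairing N (γ5 * γm μ) (T a) * pairing N (γ5 * γm μ) (T a)) =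
      (1 / 2 : ℂ) • (sing N 1 * sing N 1)
        + (1 / 4 : ℂ) • ∑ μ, (εs μ : ℂ) • (sing N (γm μ) * sing N (γm μ))
        + (((N : ℂ) - 2) / (4 * (N : ℂ))) • ∑ μ, (εs μ : ℂ) •
            (sing N (γ5 * γm μ) * sing N (γ5 * γm μ))
        - (1 / 2 : ℂ) • (sing N γ5 * sing N γ5) :=
  fierz_axial_general N hN T htr horth
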